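/- Let r, s > 1 with 1/r + 1/s = 1 and ε > 0. Let 𝔄 = {(A^x, A^σ) ∈ ℝ^{d×d_σ} × ℝ^{d_σ×d} : ‖(A^x)ᵀ‖_r ≤ α^x, ‖(A^x)ᵀ‖_{r,s} ≤ R^x, ‖(A^σ)ᵀ‖_r ≤ α^σ, ‖(A^σ)ᵀ‖_{r,s} ≤ R^σ} and let X̃₁, …, X̃ₙ ∈ ℝ^{L×d} satisfy max_{i∈[n]} ‖X̃ᵢᵀ‖_{r,∞} ≤ R̃⋆. Then there exists a finite set 𝒩 of parameter pairs (Â^x, Â^σ) ∈ ℝ^{d×d_σ} × ℝ^{d_σ×d} with |𝒩| ≤ (1 + 2(α^x R^σ + α^σ R^x) · R̃⋆ / ε)^{2dd_σ} such that for every A ∈ 𝔄 there exists Â ∈ 𝒩 with max_{i∈[n]} ‖ffn(X̃ᵢ; A)ᵀ − ffn(X̃ᵢ; Â)ᵀ‖_{r,∞} ≤ ε. -/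

import Mathlib

open Matrix

/-- The vector `ℓ_r`-norm on `Fin m → ℝ`. -/
noncomputable def lrNorm {m : ℕ} (r : ℝ) (v : Fin m → ℝ) : ℝ :=
  (∑ i, |v i| ^ r) ^ (1 / r)

/-- The matrix `(r,s)`-norm: the `ℓ_s`-norm of the `ℓ_r`-norms of the columns. -/
noncomputable def matNormRS {m n : ℕ} (r s : ℝ) (M : Matrix (Fin m) (Fin n) ℝ) : ℝ :=
  (∑ j, lrNorm r (fun i => M i j) ^ s) ^ (1 / s)

/-- The matrix `(r,∞)`-norm: maximum of the `ℓ_r`-norms of the columns. -/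
noncomputable def matNormRInf {m n : ℕ} (r : ℝ) (M : Matrix (Fin m) (Fin n) ℝ) : ℝ :=
  ⨆ j, lrNorm r (fun i => M i j)

/-- The `(r,r)`-operator norm `sup_{u ≠ 0} ‖Mu‖_r / ‖u‖_r` (with the convention `0/0 = 0`). -/
noncomputable def matOpNorm {m n : ℕ} (r : ℝ) (M : Matrix (Fin m) (Fin n) ℝ) : ℝ :=
  ⨆ u : Fin n → ℝ, lrNorm r (M.mulVec u) / lrNorm r u

/-- The two-layer feedforward network with skip connection
`ffn(X; A) = ReLU(XA^x)A^σ + X`. -/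
noncomputable def ffn {L d dσ : ℕ} (X : Matrix (Fin L) (Fin d) ℝ)
    (A : Matrix (Fin d) (Fin dσ) ℝ × Matrix (Fin dσ) (Fin d) ℝ) :
    Matrix (Fin L) (Fin d) ℝ :=
  ((X * A.1).map fun t => max t 0) * A.2 + X


open MeasureTheory Metric

lemma exists_finset_cover {E : Type*} [NormedAddCommGroup E] [NormedSpace ℝ E]
    [FiniteDimensional ℝ E] {K : Set E} {R δ : ℝ} (hR : 0 ≤ R) (hδ : 0 < δ)
    (hK : ∀ x ∈ K, ‖x‖ ≤ R) :
    ∃ S : Finset E, ↑S ⊆ K ∧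
      (S.card : ℝ) ≤ (1 + 2 * R / δ) ^ (Module.finrank ℝ E) ∧
      ∀ x ∈ K, ∃ y ∈ S, ‖x - y‖ ≤ δ := by
  classical
  borelize E
  set D := Module.finrank ℝ E with hD
  set μ : Measure E := (Module.finBasis ℝ E).addHaar with hμ
  have hbound : 0 ≤ (1 + 2 * R / δ) ^ D := by positivity
  -- key counting estimate
  have key : ∀ S : Finset E, ↑S ⊆ K →
      (∀ x ∈ S, ∀ y ∈ S, x ≠ y → δ ≤ dist x y) →
      (S.card : ℝ) ≤ (1 + 2 * R / δ) ^ D := by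
    intro S hSK hsep
    have hdisj : (↑S : Set E).PairwiseDisjoint (fun y => ball y (δ / 2)) := by
      intro a ha b hb hab
      apply ball_disjoint_ball
      simpa [dist_comm] using hsep a ha b hb hab
    have hUnion : ∀ y ∈ S, ball y (δ / 2) ⊆ closedBall 0 (R + δ / 2) := by
      intro y hy z hz
      have h1 : dist z y < δ / 2 := mem_ball.1 hz
      have h2 : ‖y‖ ≤ R := hK y (hSK hy)
      have h3 : dist z 0 ≤ dist z y + dist y 0 := dist_triangle _ _ _
      simp only [dist_zero_right] at h3
      simp only [mem_closedBall, dist_zero_right]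
      linarith
    have hmeas : μ (⋃ y ∈ S, ball y (δ / 2)) = ∑ y ∈ S, μ (ball y (δ / 2)) :=
      measure_biUnion_finset hdisj (fun y _ => measurableSet_ball)
    have hball : ∀ y : E, μ (ball y (δ / 2)) = μ (ball 0 (δ / 2)) := fun y =>
      Measure.addHaar_ball_center μ y _
    have hsum : ∑ y ∈ S, μ (ball y (δ / 2)) = S.card * μ (ball 0 (δ / 2)) := by
      simp [hball]
    have hle : S.card * μ (ball 0 (δ / 2)) ≤ μ (closedBall 0 (R + δ / 2)) := by
      rw [← hsum, ← hmeas]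
      exact measure_mono (Set.iUnion₂_subset hUnion)
    rw [Measure.addHaar_ball_of_pos μ _ (by linarith : (0:ℝ) < δ / 2),
      Measure.addHaar_closedBall μ _ (by linarith : (0:ℝ) ≤ R + δ / 2)] at hle
    have hc0 : μ (ball (0:E) 1) ≠ 0 := (measure_ball_pos μ 0 one_pos).ne'
    have hctop : μ (ball (0:E) 1) ≠ ⊤ := measure_ball_lt_top.ne
    rw [← mul_assoc] at hle
    have hle2 : ↑S.card * ENNReal.ofReal ((δ / 2) ^ D) ≤
        ENNReal.ofReal ((R + δ / 2) ^ D) :=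
      (ENNReal.mul_le_mul_iff_left hc0 hctop).1 hle
    have hδD : (0:ℝ) < (δ / 2) ^ D := by positivity
    have hle3 : ↑S.card ≤ ENNReal.ofReal ((R + δ / 2) ^ D / (δ / 2) ^ D) := by
      rw [ENNReal.ofReal_div_of_pos hδD]
      rw [ENNReal.le_div_iff_mul_le (Or.inl (by simp [ENNReal.ofReal_eq_zero]; linarith))
        (Or.inl ENNReal.ofReal_ne_top)]
      exact hle2
    rw [← ENNReal.ofReal_natCast S.card,
      ENNReal.ofReal_le_ofReal_iff (by positivity)] at hle3
    calc (S.card : ℝ) ≤ (R + δ / 2) ^ D / (δ / 2) ^ D := hle3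
      _ = ((R + δ / 2) / (δ / 2)) ^ D := (div_pow _ _ _).symm
      _ = (1 + 2 * R / δ) ^ D := by
          congr 1
          field_simp
          ring
  -- maximal separated set
  set P : Finset E → Prop := fun S => ↑S ⊆ K ∧ ∀ x ∈ S, ∀ y ∈ S, x ≠ y → δ ≤ dist x y with hP
  set C : Set ℕ := {k | ∃ S : Finset E, P S ∧ S.card = k} with hC
  have hC0 : 0 ∈ C := ⟨∅, ⟨by simp, by simp⟩, rfl⟩
  have hCbdd : BddAbove C := by
    refine ⟨⌈(1 + 2 * R / δ) ^ D⌉₊, ?_⟩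
    rintro k ⟨S, hPS, rfl⟩
    have := key S hPS.1 hPS.2
    calc S.card = ⌈(S.card : ℝ)⌉₊ := by simp
      _ ≤ ⌈(1 + 2 * R / δ) ^ D⌉₊ := Nat.ceil_le_ceil this
  obtain ⟨S, hPS, hScard⟩ := Nat.sSup_mem ⟨0, hC0⟩ hCbdd
  refine ⟨S, hPS.1, key S hPS.1 hPS.2, ?_⟩
  intro x hx
  by_contra hcon
  push_neg at hcon
  have hxS : x ∉ S := fun h => by
    have := hcon x h
    simp at this
    linarith
  have hP' : P (insert x S) := by
    constructor
    · intro z hz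
      simp only [Finset.coe_insert, Set.mem_insert_iff] at hz
      rcases hz with rfl | hz
      · exact hx
      · exact hPS.1 hz
    · intro a ha b hb hab
      simp only [Finset.mem_insert] at ha hb
      rcases ha with rfl | ha <;> rcases hb with rfl | hb
      · exact absurd rfl hab
      · have := hcon b hb
        rw [dist_eq_norm]; linarith
      · have := hcon a ha
        rw [dist_comm, dist_eq_norm]; linarith
      · exact hPS.2 a ha b hb hab
  have : (insert x S).card ≤ S.card := by
    rw [hScard]
    exact le_csSup hCbdd ⟨insert x S, hP', rfl⟩
  rw [Finset.card_insert_of_notMem hxS] at this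
  omega

section Aux

/-- The space of `k × m` matrices with the `(r,s)` norm of the transpose, as a `PiLp` type. -/
abbrev Esp (r s : ℝ) (k m : ℕ) : Type :=
  PiLp (ENNReal.ofReal s) (fun _ : Fin k => PiLp (ENNReal.ofReal r) (fun _ : Fin m => ℝ))

/-- Matrix to `Esp`. -/
def toL (r s : ℝ) {k m : ℕ} (A : Matrix (Fin k) (Fin m) ℝ) : Esp r s k m :=
  (WithLp.equiv _ _).symm (fun j => (WithLp.equiv _ _).symm (A j))

/-- `Esp` to matrix. -/
def toMx {r s : ℝ} {k m : ℕ} (a : Esp r s k m) : Matrix (Fin k) (Fin m) ℝ :=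
  Matrix.of fun j i => WithLp.equiv _ _ (WithLp.equiv _ _ a j) i

lemma toMx_toL (r s : ℝ) {k m : ℕ} (A : Matrix (Fin k) (Fin m) ℝ) : toMx (toL r s A) = A := rfl

lemma toL_toMx (r s : ℝ) {k m : ℕ} (a : Esp r s k m) : toL r s (toMx a) = a := rfl

lemma toL_sub (r s : ℝ) {k m : ℕ} (A B : Matrix (Fin k) (Fin m) ℝ) :
    toL r s (A - B) = toL r s A - toL r s B := rfl

variable {r s : ℝ}

lemma lrNorm_nonneg {m : ℕ} (v : Fin m → ℝ) : 0 ≤ lrNorm r v := by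
  unfold lrNorm
  positivity

lemma lrNorm_eq_norm (hr : 1 < r) {m : ℕ} [Fact (1 ≤ ENNReal.ofReal r)] (v : Fin m → ℝ) :
    lrNorm r v = ‖(WithLp.equiv (ENNReal.ofReal r) (∀ _ : Fin m, ℝ)).symm v‖ := by
  have h0 : (0:ℝ) < r := by linarith
  rw [PiLp.norm_eq_sum (by rwa [ENNReal.toReal_ofReal h0.le])]
  simp [lrNorm, ENNReal.toReal_ofReal h0.le, Real.norm_eq_abs]

lemma matNormRS_eq_norm (hr : 1 < r) (hs : 1 < s) {k m : ℕ}
    [Fact (1 ≤ ENNReal.ofReal r)] [Fact (1 ≤ ENNReal.ofReal s)]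
    (A : Matrix (Fin k) (Fin m) ℝ) :
    matNormRS r s Aᵀ = ‖toL r s A‖ := by
  have h0 : (0:ℝ) < s := by linarith
  rw [PiLp.norm_eq_sum (by rwa [ENNReal.toReal_ofReal h0.le])]
  simp only [ENNReal.toReal_ofReal h0.le]
  unfold matNormRS
  congr 1
  refine Finset.sum_congr rfl fun j _ => ?_
  congr 1
  have : (fun i => Aᵀ i j) = A j := rfl
  rw [this, lrNorm_eq_norm hr (A j)]
  rfl

lemma lrNorm_zero (hr : 1 < r) {m : ℕ} : lrNorm r (0 : Fin m → ℝ) = 0 := by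
  have h0 : r ≠ 0 := by positivity
  simp [lrNorm, Real.zero_rpow h0, Real.zero_rpow (inv_ne_zero h0), Real.zero_rpow (one_div_ne_zero h0)]

lemma lrNorm_eq_zero (hr : 1 < r) {m : ℕ} {v : Fin m → ℝ} (h : lrNorm r v = 0) : v = 0 := by
  have h0 : (0:ℝ) < r := by linarith
  have hsum : ∑ i, |v i| ^ r = 0 := by
    by_contra hne
    have hpos : 0 < ∑ i, |v i| ^ r := lt_of_le_of_ne (Finset.sum_nonneg fun i _ => by positivity)
      (Ne.symm hne)
    have : (0:ℝ) < (∑ i, |v i| ^ r) ^ (1 / r) := Real.rpow_pos_of_pos hpos _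
    rw [lrNorm] at h
    linarith
  funext i
  have hi : |v i| ^ r = 0 := by
    have := (Finset.sum_eq_zero_iff_of_nonneg (fun i _ => by positivity)).1 hsum i (Finset.mem_univ i)
    exact this
  have : |v i| = 0 := by
    by_contra hne
    have : (0:ℝ) < |v i| ^ r := Real.rpow_pos_of_pos (lt_of_le_of_ne (abs_nonneg _) (Ne.symm hne)) _
    linarith
  simpa [abs_eq_zero] using this

lemma lrNorm_mono (hr : 1 < r) {m : ℕ} {v w : Fin m → ℝ} (h : ∀ i, |v i| ≤ |w i|) :
    lrNorm r v ≤ lrNorm r w := by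
  have h0 : (0:ℝ) < r := by linarith
  apply Real.rpow_le_rpow (Finset.sum_nonneg fun i _ => by positivity)
  · exact Finset.sum_le_sum fun i _ => Real.rpow_le_rpow (abs_nonneg _) (h i) h0.le
  · positivity

lemma matNormRS_nonneg {m n : ℕ} (M : Matrix (Fin m) (Fin n) ℝ) : 0 ≤ matNormRS r s M :=
  Real.rpow_nonneg (Finset.sum_nonneg fun j _ => Real.rpow_nonneg (lrNorm_nonneg _) _) _

lemma matNormRS_eq_zero (hr : 1 < r) (hs : 1 < s) {m n : ℕ} {M : Matrix (Fin m) (Fin n) ℝ}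
    (h : matNormRS r s M = 0) : M = 0 := by
  have h0 : (0:ℝ) < s := by linarith
  have hsum : ∑ j, lrNorm r (fun i => M i j) ^ s = 0 := by
    by_contra hne
    have hpos : 0 < ∑ j, lrNorm r (fun i => M i j) ^ s :=
      lt_of_le_of_ne (Finset.sum_nonneg fun j _ => Real.rpow_nonneg (lrNorm_nonneg _) _) (Ne.symm hne)
    have : (0:ℝ) < (∑ j, lrNorm r (fun i => M i j) ^ s) ^ (1 / s) := Real.rpow_pos_of_pos hpos _
    rw [matNormRS] at h
    linarith
  ext i j
  have hj : lrNorm r (fun i => M i j) ^ s = 0 :=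
    (Finset.sum_eq_zero_iff_of_nonneg (fun j _ =>
      Real.rpow_nonneg (lrNorm_nonneg _) _)).1 hsum j (Finset.mem_univ j)
  have hcol : lrNorm r (fun i => M i j) = 0 := by
    by_contra hne
    have : (0:ℝ) < lrNorm r (fun i => M i j) ^ s :=
      Real.rpow_pos_of_pos (lt_of_le_of_ne (lrNorm_nonneg _) (Ne.symm hne)) _
    linarith
  have := lrNorm_eq_zero hr hcol
  exact congrFun this i

end Aux

section Aux2

variable {r s : ℝ}

/-- Hölder: `‖Mv‖_r ≤ ‖M‖_{r,s} ‖v‖_r`. -/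
lemma lrNorm_mulVec_le (hr : 1 < r) (hrs : 1 / r + 1 / s = 1) {m k : ℕ}
    (M : Matrix (Fin m) (Fin k) ℝ) (v : Fin k → ℝ) :
    lrNorm r (M.mulVec v) ≤ matNormRS r s M * lrNorm r v := by
  haveI : Fact (1 ≤ ENNReal.ofReal r) := ⟨by rw [ENNReal.one_le_ofReal]; linarith⟩
  have hconj : r.HolderConjugate s := Real.holderConjugate_iff.mpr ⟨hr, by
    rw [← one_div, ← one_div]; exact hrs⟩
  set φ := (WithLp.linearEquiv (ENNReal.ofReal r) ℝ (∀ _ : Fin m, ℝ)).symm with hφ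
  have hsum : M.mulVec v = ∑ j, v j • (fun i => M i j) := by
    funext i
    simp [Matrix.mulVec, dotProduct, Finset.sum_apply, mul_comm]
  have hnorm_eq : ∀ w : Fin m → ℝ, lrNorm r w = ‖φ w‖ := fun w => lrNorm_eq_norm hr w
  calc lrNorm r (M.mulVec v) = ‖φ (M.mulVec v)‖ := hnorm_eq _
    _ = ‖∑ j, v j • φ (fun i => M i j)‖ := by rw [hsum, map_sum]; simp only [_root_.map_smul]
    _ ≤ ∑ j, ‖v j • φ (fun i => M i j)‖ := norm_sum_le _ _
    _ = ∑ j, |v j| * lrNorm r (fun i => M i j) := by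
        refine Finset.sum_congr rfl fun j _ => ?_
        rw [norm_smul, Real.norm_eq_abs, hnorm_eq]
    _ ≤ (∑ j, |v j| ^ r) ^ (1 / r) * (∑ j, |lrNorm r (fun i => M i j)| ^ s) ^ (1 / s) := by
        have := Real.inner_le_Lp_mul_Lq (Finset.univ) (fun j => |v j|)
          (fun j => lrNorm r (fun i => M i j)) hconj
        simpa [abs_abs] using this
    _ = matNormRS r s M * lrNorm r v := by
        rw [mul_comm]
        unfold matNormRS lrNorm
        congr 2
        refine Finset.sum_congr rfl fun j _ => ?_
        rw [abs_of_nonneg (Real.rpow_nonneg (Finset.sum_nonneg fun i _ => by positivity) _)]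

lemma matOpNorm_bddAbove (hr : 1 < r) (hrs : 1 / r + 1 / s = 1) {m k : ℕ}
    (M : Matrix (Fin m) (Fin k) ℝ) :
    BddAbove (Set.range fun u : Fin k → ℝ => lrNorm r (M.mulVec u) / lrNorm r u) := by
  refine ⟨matNormRS r s M, ?_⟩
  rintro x ⟨u, rfl⟩
  rcases eq_or_lt_of_le (lrNorm_nonneg (r := r) u) with h0 | h0
  · simp [← h0, matNormRS_nonneg]
  · rw [div_le_iff₀ h0]
    exact lrNorm_mulVec_le hr hrs M u

lemma matOpNorm_nonneg (hr : 1 < r) (hrs : 1 / r + 1 / s = 1) {m k : ℕ}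
    (M : Matrix (Fin m) (Fin k) ℝ) : 0 ≤ matOpNorm r M := by
  have h := le_ciSup (matOpNorm_bddAbove (s := s) hr hrs M) (0 : Fin k → ℝ)
  simpa [matOpNorm] using le_trans (div_nonneg (lrNorm_nonneg _) (lrNorm_nonneg _)) h

lemma lrNorm_mulVec_le_op (hr : 1 < r) (hrs : 1 / r + 1 / s = 1) {m k : ℕ}
    {M : Matrix (Fin m) (Fin k) ℝ} {α : ℝ} (hM : matOpNorm r M ≤ α) (v : Fin k → ℝ) :
    lrNorm r (M.mulVec v) ≤ α * lrNorm r v := by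
  rcases eq_or_lt_of_le (lrNorm_nonneg (r := r) v) with h0 | h0
  · have hv : v = 0 := lrNorm_eq_zero hr h0.symm
    subst hv
    rw [Matrix.mulVec_zero, lrNorm_zero hr, ← h0, mul_zero]
  · have h := le_ciSup (matOpNorm_bddAbove (s := s) hr hrs M) v
    have h2 : lrNorm r (M.mulVec v) / lrNorm r v ≤ α := le_trans h hM
    rw [div_le_iff₀ h0] at h2
    calc lrNorm r (M.mulVec v) ≤ α * lrNorm r v := h2

lemma matOpNorm_nonpos_eq_zero (hr : 1 < r) (hrs : 1 / r + 1 / s = 1) {m k : ℕ}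
    {M : Matrix (Fin m) (Fin k) ℝ} (hM : matOpNorm r M ≤ 0) : M = 0 := by
  ext i j
  have h := lrNorm_mulVec_le_op hr hrs hM (Pi.single j 1)
  rw [zero_mul] at h
  have h0 : M.mulVec (Pi.single j 1) = 0 :=
    lrNorm_eq_zero hr (le_antisymm h (lrNorm_nonneg _))
  have := congrFun h0 i
  simpa [Matrix.mulVec_single] using this

end Aux2

section Aux3

variable {r s : ℝ}

lemma lrNorm_add_le (hr : 1 < r) {m : ℕ} (v w : Fin m → ℝ) :
    lrNorm r (v + w) ≤ lrNorm r v + lrNorm r w := by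
  haveI : Fact (1 ≤ ENNReal.ofReal r) := ⟨by rw [ENNReal.one_le_ofReal]; linarith⟩
  set φ := (WithLp.linearEquiv (ENNReal.ofReal r) ℝ (∀ _ : Fin m, ℝ)).symm with hφ
  have hnorm_eq : ∀ w : Fin m → ℝ, lrNorm r w = ‖φ w‖ := fun w => lrNorm_eq_norm hr w
  rw [hnorm_eq, hnorm_eq, hnorm_eq, map_add]
  exact norm_add_le _ _

lemma matNormRInf_nonneg {m n : ℕ} (M : Matrix (Fin m) (Fin n) ℝ) :
    0 ≤ matNormRInf r M := Real.iSup_nonneg fun j => lrNorm_nonneg _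

lemma matNormRInf_col_le {m n : ℕ} (M : Matrix (Fin m) (Fin n) ℝ) (j : Fin n) :
    lrNorm r (fun i => M i j) ≤ matNormRInf r M := by
  unfold matNormRInf
  exact le_ciSup (f := fun j => lrNorm r (fun i => M i j))
    (Set.Finite.bddAbove (Set.finite_range _)) j

lemma matNormRInf_le {m n : ℕ} {M : Matrix (Fin m) (Fin n) ℝ} {a : ℝ} (ha : 0 ≤ a)
    (h : ∀ j, lrNorm r (fun i => M i j) ≤ a) : matNormRInf r M ≤ a :=
  Real.iSup_le h ha

lemma finrank_Esp (r s : ℝ) (k m : ℕ) : Module.finrank ℝ (Esp r s k m) = k * m := by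
  have e1 : Esp r s k m ≃ₗ[ℝ] (Fin k → PiLp (ENNReal.ofReal r) (fun _ : Fin m => ℝ)) :=
    WithLp.linearEquiv _ ℝ _
  have e2 : (Fin k → PiLp (ENNReal.ofReal r) (fun _ : Fin m => ℝ)) ≃ₗ[ℝ] (Fin k → Fin m → ℝ) :=
    LinearEquiv.piCongrRight fun _ => WithLp.linearEquiv _ ℝ _
  rw [LinearEquiv.finrank_eq (e1.trans e2)]
  rw [Module.finrank_pi_fintype ℝ]
  simp [Module.finrank_pi, Finset.sum_const, Fintype.card_fin]

end Aux3

section Aux4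

variable {r s : ℝ}

lemma abs_max_zero_le (a : ℝ) : |max a 0| ≤ |a| := by
  rcases le_total a 0 with h | h
  · simp [max_eq_right h]
  · simp [max_eq_left h]

lemma ffn_row_sub {L d dσ : ℕ} (X : Matrix (Fin L) (Fin d) ℝ)
    (A B : Matrix (Fin d) (Fin dσ) ℝ × Matrix (Fin dσ) (Fin d) ℝ) (ℓ : Fin L) :
    (fun k => ((ffn X A)ᵀ - (ffn X B)ᵀ) k ℓ) =
      A.2ᵀ.mulVec (fun m => max (A.1ᵀ.mulVec (fun j => X ℓ j) m) 0)
      - B.2ᵀ.mulVec (fun m => max (B.1ᵀ.mulVec (fun j => X ℓ j) m) 0) := by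
  funext k
  simp only [ffn, Matrix.sub_apply, Matrix.transpose_apply, Matrix.add_apply, Matrix.mul_apply,
    Matrix.map_apply, Matrix.mulVec, dotProduct, Pi.sub_apply]
  have e : ∀ (C : Matrix (Fin d) (Fin dσ) ℝ) (D : Matrix (Fin dσ) (Fin d) ℝ),
      (∑ m, max (∑ j, X ℓ j * C j m) 0 * D m k) + X ℓ k - ((∑ m, max (∑ j, X ℓ j * C j m) 0 * D m k) + X ℓ k) = 0 := by
    intro C D; ring
  have e2 : ∀ (C : Matrix (Fin d) (Fin dσ) ℝ) (D : Matrix (Fin dσ) (Fin d) ℝ),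
      ∑ m, max (∑ j, X ℓ j * C j m) 0 * D m k = ∑ m, D m k * max (∑ j, C j m * X ℓ j) 0 := by
    intro C D
    refine Finset.sum_congr rfl fun m _ => ?_
    rw [mul_comm]
    congr 2
    exact Finset.sum_congr rfl fun j _ => mul_comm _ _
  rw [← e2, ← e2]
  ring

lemma row_est (hr : 1 < r) (hrs : 1 / r + 1 / s = 1) {d dσ : ℕ}
    {αx ασ δ1 δ2 Rt : ℝ} (hαx : 0 ≤ αx) (hασ : 0 ≤ ασ) (hδ2 : 0 ≤ δ2) (hRt : 0 ≤ Rt)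
    {A1 B1 : Matrix (Fin d) (Fin dσ) ℝ} {A2 B2 : Matrix (Fin dσ) (Fin d) ℝ}
    (hA1 : matOpNorm r A1ᵀ ≤ αx) (hB2 : matOpNorm r B2ᵀ ≤ ασ)
    (h1 : matNormRS r s (A1 - B1)ᵀ ≤ δ1) (h2 : matNormRS r s (A2 - B2)ᵀ ≤ δ2)
    {x : Fin d → ℝ} (hx : lrNorm r x ≤ Rt) :
    lrNorm r (A2ᵀ.mulVec (fun m => max (A1ᵀ.mulVec x m) 0)
      - B2ᵀ.mulVec (fun m => max (B1ᵀ.mulVec x m) 0)) ≤ δ2 * (αx * Rt) + ασ * (δ1 * Rt) := by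
  set u : Fin dσ → ℝ := fun m => max (A1ᵀ.mulVec x m) 0 with hu
  set w : Fin dσ → ℝ := fun m => max (B1ᵀ.mulVec x m) 0 with hw
  have hiden : A2ᵀ.mulVec u - B2ᵀ.mulVec w
      = (A2ᵀ - B2ᵀ).mulVec u + B2ᵀ.mulVec (u - w) := by
    rw [Matrix.sub_mulVec, Matrix.mulVec_sub]
    abel
  rw [hiden]
  have hux : lrNorm r u ≤ αx * Rt := by
    have h1' : lrNorm r u ≤ lrNorm r (A1ᵀ.mulVec x) :=
      lrNorm_mono hr fun m => abs_max_zero_le _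
    have h2' : lrNorm r (A1ᵀ.mulVec x) ≤ αx * lrNorm r x :=
      lrNorm_mulVec_le_op hr hrs hA1 x
    have h3' : αx * lrNorm r x ≤ αx * Rt := mul_le_mul_of_nonneg_left hx hαx
    linarith
  have huw : lrNorm r (u - w) ≤ δ1 * Rt := by
    have h1' : lrNorm r (u - w) ≤ lrNorm r ((A1ᵀ - B1ᵀ).mulVec x) := by
      apply lrNorm_mono hr
      intro m
      have : (A1ᵀ - B1ᵀ).mulVec x m = A1ᵀ.mulVec x m - B1ᵀ.mulVec x m := by
        rw [Matrix.sub_mulVec]; rfl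
      rw [this]
      exact abs_max_sub_max_le_abs _ _ _
    have h2' : lrNorm r ((A1ᵀ - B1ᵀ).mulVec x) ≤ matNormRS r s (A1ᵀ - B1ᵀ) * lrNorm r x :=
      lrNorm_mulVec_le hr hrs _ _
    have h3' : matNormRS r s (A1ᵀ - B1ᵀ) ≤ δ1 := by
      rwa [← Matrix.transpose_sub]
    have h4' : matNormRS r s (A1ᵀ - B1ᵀ) * lrNorm r x ≤ δ1 * Rt :=
      mul_le_mul h3' hx (lrNorm_nonneg _) (le_trans (matNormRS_nonneg _) h3')
    linarith
  have t1 : lrNorm r ((A2ᵀ - B2ᵀ).mulVec u) ≤ δ2 * (αx * Rt) := by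
    have h2' : lrNorm r ((A2ᵀ - B2ᵀ).mulVec u) ≤ matNormRS r s (A2ᵀ - B2ᵀ) * lrNorm r u :=
      lrNorm_mulVec_le hr hrs _ _
    have h3' : matNormRS r s (A2ᵀ - B2ᵀ) ≤ δ2 := by
      rwa [← Matrix.transpose_sub]
    have h4' : matNormRS r s (A2ᵀ - B2ᵀ) * lrNorm r u ≤ δ2 * (αx * Rt) :=
      mul_le_mul h3' hux (lrNorm_nonneg _) hδ2
    linarith
  have t2 : lrNorm r (B2ᵀ.mulVec (u - w)) ≤ ασ * (δ1 * Rt) := by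
    have h2' : lrNorm r (B2ᵀ.mulVec (u - w)) ≤ ασ * lrNorm r (u - w) :=
      lrNorm_mulVec_le_op hr hrs hB2 _
    have h3' : ασ * lrNorm r (u - w) ≤ ασ * (δ1 * Rt) := mul_le_mul_of_nonneg_left huw hασ
    linarith
  calc lrNorm r ((A2ᵀ - B2ᵀ).mulVec u + B2ᵀ.mulVec (u - w))
      ≤ lrNorm r ((A2ᵀ - B2ᵀ).mulVec u) + lrNorm r (B2ᵀ.mulVec (u - w)) := lrNorm_add_le hr _ _
    _ ≤ δ2 * (αx * Rt) + ασ * (δ1 * Rt) := add_le_add t1 t2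

lemma ffn_zero_pair {L d dσ : ℕ} (X : Matrix (Fin L) (Fin d) ℝ) :
    ffn X ((0 : Matrix (Fin d) (Fin dσ) ℝ), (0 : Matrix (Fin dσ) (Fin d) ℝ)) = X := by
  simp [ffn]

lemma ffn_A1_zero {L d dσ : ℕ} (X : Matrix (Fin L) (Fin d) ℝ)
    (A : Matrix (Fin d) (Fin dσ) ℝ × Matrix (Fin dσ) (Fin d) ℝ) (h : A.1 = 0) :
    ffn X A = X := by
  have : (X * A.1).map (fun t => max t 0) = 0 := by
    rw [h, Matrix.mul_zero]
    ext i j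
    simp
  simp [ffn, this]

lemma ffn_A2_zero {L d dσ : ℕ} (X : Matrix (Fin L) (Fin d) ℝ)
    (A : Matrix (Fin d) (Fin dσ) ℝ × Matrix (Fin dσ) (Fin d) ℝ) (h : A.2 = 0) :
    ffn X A = X := by
  simp [ffn, h]

lemma ffn_X_zero {L d dσ : ℕ}
    (A : Matrix (Fin d) (Fin dσ) ℝ × Matrix (Fin dσ) (Fin d) ℝ) :
    ffn (0 : Matrix (Fin L) (Fin d) ℝ) A = 0 := by
  have : ((0 : Matrix (Fin L) (Fin d) ℝ) * A.1).map (fun t => max t 0) = 0 := by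
    rw [Matrix.zero_mul]
    ext i j
    simp
  simp [ffn, this]

end Aux4

/-- Covering number of the empirical image class of the feedforward
network over the parameter class `𝔄`. -/
theorem ffn_covering
    {L d dσ n : ℕ} (hn : 0 < n)
    (r s ε : ℝ) (hr : 1 < r) (hs : 1 < s) (hrs : 1 / r + 1 / s = 1) (hε : 0 < ε)
    (αx Rx ασ Rσ : ℝ)
    (Xt : Fin n → Matrix (Fin L) (Fin d) ℝ) (Rtstar : ℝ)
    (hX : ∀ i, matNormRInf r (Xt i)ᵀ ≤ Rtstar) :
    ∃ 𝒩 : Finset (Matrix (Fin d) (Fin dσ) ℝ × Matrix (Fin dσ) (Fin d) ℝ),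
      ((𝒩.card : ℝ) ≤ (1 + 2 * (αx * Rσ + ασ * Rx) * Rtstar / ε) ^ (2 * d * dσ)) ∧
      ∀ A : Matrix (Fin d) (Fin dσ) ℝ × Matrix (Fin dσ) (Fin d) ℝ,
        matOpNorm r A.1ᵀ ≤ αx → matNormRS r s A.1ᵀ ≤ Rx →
        matOpNorm r A.2ᵀ ≤ ασ → matNormRS r s A.2ᵀ ≤ Rσ →
        ∃ Ah ∈ 𝒩, ∀ i, matNormRInf r ((ffn (Xt i) A)ᵀ - (ffn (Xt i) Ah)ᵀ) ≤ ε := by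
  classical
  have hRt0 : 0 ≤ Rtstar := le_trans (matNormRInf_nonneg _) (hX ⟨0, hn⟩)
  by_cases hcl : ∃ A : Matrix (Fin d) (Fin dσ) ℝ × Matrix (Fin dσ) (Fin d) ℝ,
      matOpNorm r A.1ᵀ ≤ αx ∧ matNormRS r s A.1ᵀ ≤ Rx ∧
      matOpNorm r A.2ᵀ ≤ ασ ∧ matNormRS r s A.2ᵀ ≤ Rσ
  swap
  · refine ⟨∅, ?_, ?_⟩
    · simpa using Even.pow_nonneg ⟨d * dσ, by ring⟩ _
    · intro A h1 h2 h3 h4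
      exact absurd ⟨A, h1, h2, h3, h4⟩ hcl
  obtain ⟨A₀, hA₀1, hA₀2, hA₀3, hA₀4⟩ := hcl
  have hαx0 : 0 ≤ αx := le_trans (matOpNorm_nonneg (s := s) hr hrs _) hA₀1
  have hRx0 : 0 ≤ Rx := le_trans (matNormRS_nonneg _) hA₀2
  have hασ0 : 0 ≤ ασ := le_trans (matOpNorm_nonneg (s := s) hr hrs _) hA₀3
  have hRσ0 : 0 ≤ Rσ := le_trans (matNormRS_nonneg _) hA₀4
  have hB0 : 0 ≤ αx * Rσ + ασ * Rx := by positivity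
  have hbase : (1:ℝ) ≤ 1 + 2 * (αx * Rσ + ασ * Rx) * Rtstar / ε := by
    have : 0 ≤ 2 * (αx * Rσ + ασ * Rx) * Rtstar / ε := by positivity
    linarith
  by_cases hdeg : αx = 0 ∨ Rx = 0 ∨ ασ = 0 ∨ Rσ = 0 ∨ Rtstar = 0
  · -- degenerate case : the network is constant on the class
    refine ⟨{(0, 0)}, ?_, ?_⟩
    · simpa using one_le_pow₀ hbase
    · intro A h1 h2 h3 h4
      refine ⟨(0, 0), Finset.mem_singleton_self _, fun i => ?_⟩
      have hdiff : (ffn (Xt i) A)ᵀ - (ffn (Xt i) ((0,0) :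
          Matrix (Fin d) (Fin dσ) ℝ × Matrix (Fin dσ) (Fin d) ℝ))ᵀ = 0 := by
        rcases hdeg with h | h | h | h | h
        · have hz : A.1 = 0 := Matrix.transpose_eq_zero.1
            (matOpNorm_nonpos_eq_zero (s := s) hr hrs (h ▸ h1))
          rw [ffn_A1_zero _ _ hz, ffn_zero_pair, sub_self]
        · have hz : A.1 = 0 := Matrix.transpose_eq_zero.1
            (matNormRS_eq_zero hr hs (le_antisymm (h ▸ h2) (matNormRS_nonneg _)))
          rw [ffn_A1_zero _ _ hz, ffn_zero_pair, sub_self]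
        · have hz : A.2 = 0 := Matrix.transpose_eq_zero.1
            (matOpNorm_nonpos_eq_zero (s := s) hr hrs (h ▸ h3))
          rw [ffn_A2_zero _ _ hz, ffn_zero_pair, sub_self]
        · have hz : A.2 = 0 := Matrix.transpose_eq_zero.1
            (matNormRS_eq_zero hr hs (le_antisymm (h ▸ h4) (matNormRS_nonneg _)))
          rw [ffn_A2_zero _ _ hz, ffn_zero_pair, sub_self]
        · have hXz : Xt i = 0 := by
            ext ℓ j
            have hcol : lrNorm r (fun k => (Xt i)ᵀ k ℓ) ≤ 0 := by
              have := matNormRInf_col_le (r := r) (Xt i)ᵀ ℓ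
              have h2' := hX i
              rw [h] at h2'
              linarith
            have := lrNorm_eq_zero hr (le_antisymm hcol (lrNorm_nonneg _))
            have := congrFun this j
            simpa using this
          rw [hXz, ffn_X_zero, ffn_X_zero, sub_self]
      rw [hdiff]
      apply matNormRInf_le hε.le
      intro j
      have hc : (fun i => (0 : Matrix (Fin d) (Fin L) ℝ) i j) = (0 : Fin d → ℝ) := rfl
      rw [hc, lrNorm_zero hr]
      exact hε.le
  -- main case
  push_neg at hdeg
  obtain ⟨hd1, hd2, hd3, hd4, hd5⟩ := hdeg
  have hαx : 0 < αx := lt_of_le_of_ne hαx0 (Ne.symm hd1)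
  have hRx : 0 < Rx := lt_of_le_of_ne hRx0 (Ne.symm hd2)
  have hασ : 0 < ασ := lt_of_le_of_ne hασ0 (Ne.symm hd3)
  have hRσ : 0 < Rσ := lt_of_le_of_ne hRσ0 (Ne.symm hd4)
  have hRt : 0 < Rtstar := lt_of_le_of_ne hRt0 (Ne.symm hd5)
  set B : ℝ := αx * Rσ + ασ * Rx with hB
  have hBpos : 0 < B := add_pos (mul_pos hαx hRσ) (mul_pos hασ hRx)
  set δ1 : ℝ := ε * Rx / (Rtstar * B) with hδ1
  set δ2 : ℝ := ε * Rσ / (Rtstar * B) with hδ2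
  have hδ1pos : 0 < δ1 := by positivity
  have hδ2pos : 0 < δ2 := by positivity
  haveI : Fact (1 ≤ ENNReal.ofReal r) := ⟨by rw [ENNReal.one_le_ofReal]; linarith⟩
  haveI : Fact (1 ≤ ENNReal.ofReal s) := ⟨by rw [ENNReal.one_le_ofReal]; linarith⟩
  set K1 : Set (Esp r s d dσ) :=
    {a | matOpNorm r (toMx a)ᵀ ≤ αx ∧ matNormRS r s (toMx a)ᵀ ≤ Rx} with hK1def
  set K2 : Set (Esp r s dσ d) :=
    {a | matOpNorm r (toMx a)ᵀ ≤ ασ ∧ matNormRS r s (toMx a)ᵀ ≤ Rσ} with hK2def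
  have hK1 : ∀ a ∈ K1, ‖a‖ ≤ Rx := by
    intro a ha
    have := (matNormRS_eq_norm hr hs (toMx a)).symm
    rw [toL_toMx] at this
    rw [this]
    exact ha.2
  have hK2 : ∀ a ∈ K2, ‖a‖ ≤ Rσ := by
    intro a ha
    have := (matNormRS_eq_norm hr hs (toMx a)).symm
    rw [toL_toMx] at this
    rw [this]
    exact ha.2
  obtain ⟨S1, hS1K, hS1card, hS1cov⟩ := exists_finset_cover hRx0 hδ1pos hK1
  obtain ⟨S2, hS2K, hS2card, hS2cov⟩ := exists_finset_cover hRσ0 hδ2pos hK2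
  rw [finrank_Esp] at hS1card hS2card
  refine ⟨(S1 ×ˢ S2).image (fun p => (toMx p.1, toMx p.2)), ?_, ?_⟩
  · have hb1 : 1 + 2 * Rx / δ1 = 1 + 2 * B * Rtstar / ε := by
      rw [hδ1]
      field_simp
    have hb2 : 1 + 2 * Rσ / δ2 = 1 + 2 * B * Rtstar / ε := by
      rw [hδ2]
      field_simp
    rw [hb1] at hS1card
    rw [hb2] at hS2card
    have hcard : ((S1 ×ˢ S2).image (fun p => (toMx p.1, toMx p.2))).card ≤ S1.card * S2.card := by
      calc ((S1 ×ˢ S2).image (fun p => (toMx p.1, toMx p.2))).card ≤ (S1 ×ˢ S2).card :=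
            Finset.card_image_le
        _ = S1.card * S2.card := Finset.card_product _ _
    calc (((S1 ×ˢ S2).image (fun p => (toMx p.1, toMx p.2))).card : ℝ)
        ≤ (S1.card : ℝ) * (S2.card : ℝ) := by exact_mod_cast hcard
      _ ≤ (1 + 2 * B * Rtstar / ε) ^ (d * dσ) * (1 + 2 * B * Rtstar / ε) ^ (dσ * d) := by
          apply mul_le_mul hS1card hS2card (Nat.cast_nonneg _)
          exact le_trans (Nat.cast_nonneg _) hS1card
      _ = (1 + 2 * B * Rtstar / ε) ^ (2 * d * dσ) := by
          rw [← pow_add]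
          congr 1
          ring
      _ = (1 + 2 * (αx * Rσ + ασ * Rx) * Rtstar / ε) ^ (2 * d * dσ) := by rw [hB]
  · intro A h1 h2 h3 h4
    have ha1 : toL r s A.1 ∈ K1 := by
      constructor <;> rw [toMx_toL] <;> assumption
    have ha2 : toL r s A.2 ∈ K2 := by
      constructor <;> rw [toMx_toL] <;> assumption
    obtain ⟨y1, hy1S, hy1⟩ := hS1cov _ ha1
    obtain ⟨y2, hy2S, hy2⟩ := hS2cov _ ha2
    have hd1' : matNormRS r s (A.1 - toMx y1)ᵀ ≤ δ1 := by
      rw [matNormRS_eq_norm hr hs, toL_sub]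
      have : toL r s (toMx y1) = y1 := toL_toMx r s y1
      rw [this]
      exact hy1
    have hd2' : matNormRS r s (A.2 - toMx y2)ᵀ ≤ δ2 := by
      rw [matNormRS_eq_norm hr hs, toL_sub]
      have : toL r s (toMx y2) = y2 := toL_toMx r s y2
      rw [this]
      exact hy2
    have hy2K : matOpNorm r (toMx y2)ᵀ ≤ ασ := (hS2K hy2S).1
    refine ⟨(toMx y1, toMx y2), Finset.mem_image.2
      ⟨(y1, y2), Finset.mem_product.2 ⟨hy1S, hy2S⟩, rfl⟩, fun i => ?_⟩
    apply matNormRInf_le hε.le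
    intro ℓ
    have hrow := ffn_row_sub (Xt i) A (toMx y1, toMx y2) ℓ
    rw [hrow]
    have hx : lrNorm r (fun j => Xt i ℓ j) ≤ Rtstar := by
      have := matNormRInf_col_le (r := r) (Xt i)ᵀ ℓ
      exact le_trans this (hX i)
    have hest := row_est hr hrs hαx0 hασ0 hδ2pos.le hRt0 h1 hy2K hd1' hd2' hx
    refine le_trans hest (le_of_eq ?_)
    rw [hδ1, hδ2, hB]
    field_simp
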